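/- arXiv:2508.08033 — 5 statements merged into one kernel-verified Lean document; each statement's English description precedes it below -/
import Mathlib

section
/- Let (X,d) be a metric space, f : X → X a map, α' ≥ 0, and let B₁, …, B_m be nonempty subsets of X. Let E ⊆ {1,…,m} × {1,…,m} be a set of directed edges such that for every (k,j) ∈ E, every x ∈ B_k and every y ∈ B_j satisfy d(f(x), y) ≤ α'. Suppose every index k ∈ {1,…,m} lies on a directed cycle of E. Then for every α > α', every point of B₁ ∪ … ∪ B_m is α-chain recurrent; that is, B₁ ∪ … ∪ B_m ⊆ 𝓡_α. -/
/-- An ε-chain from `y` to `z` for the map `f`: a finite sequence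
`y = c 0, c 1, …, c m = z` with `m ≥ 1` (i.e. at least two points) and
`dist (f (c k)) (c (k+1)) < ε` for all `k < m`. -/
def EpsChain {X : Type*} [MetricSpace X] (f : X → X) (ε : ℝ) (y z : X) : Prop :=
  ∃ m : ℕ, 1 ≤ m ∧ ∃ c : ℕ → X, c 0 = y ∧ c m = z ∧ ∀ k < m, dist (f (c k)) (c (k + 1)) < ε

/-- The set `𝓡_ε` of ε-chain recurrent points of `f`. -/
def chainRecSet {X : Type*} [MetricSpace X] (f : X → X) (ε : ℝ) : Set X :=
  {y | EpsChain f ε y y}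

/-- The index `k` lies on a directed cycle of the edge set `E`. -/
def OnCycle {m : ℕ} (E : Set (Fin m × Fin m)) (k : Fin m) : Prop :=
  ∃ s : ℕ, 1 ≤ s ∧ ∃ c : ℕ → Fin m, c 0 = k ∧ c s = k ∧ ∀ i < s, (c i, c (i + 1)) ∈ E

theorem epsChain_of_path {X ι : Type*} [MetricSpace X] {f : X → X} {ε : ℝ}
    {B : ι → Set X} (hBne : ∀ k, (B k).Nonempty) {E : Set (ι × ι)}
    (hE : ∀ e ∈ E, ∀ x ∈ B e.1, ∀ y ∈ B e.2, dist (f x) y < ε)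
    {s : ℕ} (hs : 1 ≤ s) {c : ℕ → ι} (hc : ∀ i < s, (c i, c (i + 1)) ∈ E)
    {x y : X} (hx : x ∈ B (c 0)) (hy : y ∈ B (c s)) : EpsChain f ε x y := by
  have hs0 : s ≠ 0 := by omega
  let p : ℕ → X := fun i => if i = 0 then x else if i = s then y else (hBne (c i)).some
  have hp : ∀ i, p i ∈ B (c i) := by
    intro i
    by_cases hi0 : i = 0
    · subst hi0; simpa [p] using hx
    by_cases his : i = s
    · subst his; simpa [p, hi0] using hy
    simpa [p, hi0, his] using (hBne (c i)).some_mem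
  exact ⟨s, hs, p, if_pos rfl, by simp [p, hs0],
    fun i hi => hE _ (hc i hi) _ (hp i) _ (hp (i + 1))⟩

theorem mem_chainRecSet_of_onCycle {X : Type*} [MetricSpace X] {f : X → X} {ε : ℝ} {m : ℕ}
    {B : Fin m → Set X} (hBne : ∀ k, (B k).Nonempty) {E : Set (Fin m × Fin m)}
    (hE : ∀ e ∈ E, ∀ x ∈ B e.1, ∀ y ∈ B e.2, dist (f x) y < ε)
    {k : Fin m} (hk : OnCycle E k) {x : X} (hx : x ∈ B k) : x ∈ chainRecSet f ε := by
  obtain ⟨s, hs, c, hc0, hcs, hc⟩ := hk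
  exact epsChain_of_path hBne hE hs hc (hc0 ▸ hx) (hcs ▸ hx)

theorem stmt_6_general {X : Type*} [MetricSpace X] (f : X → X) (α' : ℝ)
    (m : ℕ) (B : Fin m → Set X) (hBne : ∀ k, (B k).Nonempty)
    (E : Set (Fin m × Fin m))
    (hE : ∀ e ∈ E, ∀ x ∈ B e.1, ∀ y ∈ B e.2, dist (f x) y ≤ α')
    (hcyc : ∀ k : Fin m, OnCycle E k) :
    ∀ α : ℝ, α' < α → (⋃ k, B k) ⊆ chainRecSet f α := by
  intro α hα x hx
  obtain ⟨k, hxk⟩ := Set.mem_iUnion.mp hx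
  have hE_lt : ∀ e ∈ E, ∀ x ∈ B e.1, ∀ y ∈ B e.2, dist (f x) y < α :=
    fun e he x hx y hy => (hE e he x hx y hy).trans_lt hα
  exact mem_chainRecSet_of_onCycle hBne hE_lt (hcyc k) hxk

/-- if every edge `(k,j) ∈ E` satisfies `dist (f x) y ≤ α'` for all
`x ∈ B k`, `y ∈ B j`, and every index lies on a directed cycle of `E`, then for every
`α > α'` all points of `B₁ ∪ ⋯ ∪ B_m` are α-chain recurrent. -/
theorem stmt_6 {X : Type*} [MetricSpace X] (f : X → X) (α' : ℝ) (hα' : 0 ≤ α')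
    (m : ℕ) (B : Fin m → Set X) (hBne : ∀ k, (B k).Nonempty)
    (E : Set (Fin m × Fin m))
    (hE : ∀ e ∈ E, ∀ x ∈ B e.1, ∀ y ∈ B e.2, dist (f x) y ≤ α')
    (hcyc : ∀ k : Fin m, OnCycle E k) :
    ∀ α : ℝ, α' < α → (⋃ k, B k) ⊆ chainRecSet f α :=
  stmt_6_general f α' m B hBne E hE hcyc
end

section
/- Let (X,d) be a metric space, f : X → X a map, ε > 0, and let B₁, …, B_m be subsets of X with union 𝓑 = B₁ ∪ … ∪ B_m. Let E ⊆ {1,…,m} × {1,…,m} be a set of directed edges such that whenever there exist points x ∈ B_k and y ∈ B_j with d(f(x), y) < ε, then (k,j) ∈ E. Suppose x ∈ 𝓑 admits an ε-chain from x to x all of whose points lie in 𝓑. Then there exists an index k with x ∈ B_k such that k lies on a directed cycle of E. -/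
/-!
Follow the closed ε-chain `x = c₀, c₁, …, cₙ = x` through the boxes: choosing a box `B (b k)`
containing each `c k`, every step `dist (f (c k)) (c (k+1)) < ε` forces `(b k, b (k+1)) ∈ E`.
Choosing the boxes of `c 0, …, c (n-1)` and reusing the box of `c 0` for `c n = c 0` makes the
itinerary `b` a closed path in `E`, i.e. a cycle through the box `B (b 0)` containing `x`.
-/

theorem exists_closed_itinerary {X : Type*} {m : ℕ} (B : Fin m → Set X) {c : ℕ → X} {n : ℕ}
    (hn : 1 ≤ n) (hcn : c n = c 0) (hmem : ∀ k ≤ n, c k ∈ ⋃ i, B i) :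
    ∃ b : ℕ → Fin m, b n = b 0 ∧ ∀ k ≤ n, c k ∈ B (b k) := by
  have hwrap : ∀ k ≤ n, c (k % n) = c k := by
    intro k hk
    rcases hk.lt_or_eq with hlt | rfl
    · rw [Nat.mod_eq_of_lt hlt]
    · rw [Nat.mod_self, hcn]
  choose g hg using fun j : Fin n => Set.mem_iUnion.mp (hmem j j.is_lt.le)
  refine ⟨fun k => g ⟨k % n, Nat.mod_lt k hn⟩, by simp only [Nat.mod_self, Nat.zero_mod],
    fun k hk => ?_⟩
  simpa only [hwrap k hk] using hg ⟨k % n, Nat.mod_lt k hn⟩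

theorem stmt_7_general {X : Type*} [MetricSpace X] (f : X → X) (ε : ℝ)
    (m : ℕ) (B : Fin m → Set X) (E : Set (Fin m × Fin m))
    (hE : ∀ k j : Fin m, (∃ x ∈ B k, ∃ y ∈ B j, dist (f x) y < ε) → (k, j) ∈ E)
    (x : X)
    (hchain : ∃ n : ℕ, 1 ≤ n ∧ ∃ c : ℕ → X, c 0 = x ∧ c n = x ∧
      (∀ k ≤ n, c k ∈ ⋃ i, B i) ∧ ∀ k < n, dist (f (c k)) (c (k + 1)) < ε) :
    ∃ k : Fin m, x ∈ B k ∧ OnCycle E k := by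
  obtain ⟨n, hn, c, hc0, hcn, hmem, hstep⟩ := hchain
  obtain ⟨b, hbn, hb⟩ := exists_closed_itinerary B hn (hcn.trans hc0.symm) hmem
  refine ⟨b 0, hc0 ▸ hb 0 n.zero_le, n, hn, b, rfl, hbn, fun k hk => ?_⟩
  exact hE _ _ ⟨c k, hb k hk.le, c (k + 1), hb (k + 1) hk, hstep k hk⟩

/-- soundness of the box chain model.  If the edge set `E` contains an edge
`(k,j)` whenever some `x ∈ B k` and `y ∈ B j` satisfy `dist (f x) y < ε`, and `x ∈ 𝓑`
admits an ε-chain from `x` to `x` all of whose points lie in `𝓑 = ⋃ B i`, then `x` lies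
in some box `B k` whose index `k` lies on a directed cycle of `E`. -/
theorem stmt_7 {X : Type*} [MetricSpace X] (f : X → X) (ε : ℝ)
    (m : ℕ) (B : Fin m → Set X) (E : Set (Fin m × Fin m))
    (hE : ∀ k j : Fin m, (∃ x ∈ B k, ∃ y ∈ B j, dist (f x) y < ε) → (k, j) ∈ E)
    (x : X) (hx : x ∈ ⋃ i, B i)
    (hchain : ∃ n : ℕ, 1 ≤ n ∧ ∃ c : ℕ → X, c 0 = x ∧ c n = x ∧
      (∀ k ≤ n, c k ∈ ⋃ i, B i) ∧ ∀ k < n, dist (f (c k)) (c (k + 1)) < ε) :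
    ∃ k : Fin m, x ∈ B k ∧ OnCycle E k :=
  stmt_7_general f ε m B E hE x hchain
end

section
/- Let f(z,w) = (p(z), q(z,w)) be a monic polynomial skew product of ℂ² of degree d ≥ 2. Then the chain recurrent set 𝓡 of f (with respect to the Euclidean metric on ℂ²) is contained in the filled Julia set K of f; in particular, 𝓡 is a bounded subset of ℂ², so there exists R > 0 with 𝓡 ⊆ [−R,R]⁴ (identifying ℂ² with ℝ⁴). -/
/-- The polynomial skew product `f(z,w) = (p(z), q(z,w))` of ℂ². -/
noncomputable def skew (p : Polynomial ℂ) (q : MvPolynomial (Fin 2) ℂ) (x : ℂ × ℂ) : ℂ × ℂ :=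
  (Polynomial.eval x.1 p, MvPolynomial.eval ![x.1, x.2] q)

/-- The Euclidean distance on ℂ², identifying ℂ² with ℝ⁴. -/
noncomputable def deuc2 (x y : ℂ × ℂ) : ℝ :=
  Real.sqrt (‖x.1 - y.1‖ ^ 2 + ‖x.2 - y.2‖ ^ 2)

/-- An ε-chain from `y` to `z` for the map `f`, with respect to an arbitrary distance
function `ρ`: a finite sequence `y = c 0, …, c m = z` with `m ≥ 1` and
`ρ (f (c k)) (c (k+1)) < ε` for all `k < m`. -/
def EpsChainD {X : Type*} (ρ : X → X → ℝ) (f : X → X) (ε : ℝ) (y z : X) : Prop :=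
  ∃ m : ℕ, 1 ≤ m ∧ ∃ c : ℕ → X, c 0 = y ∧ c m = z ∧ ∀ k < m, ρ (f (c k)) (c (k + 1)) < ε

/-- The set `𝓡_ε` of ε-chain recurrent points of `f`, with respect to the distance `ρ`. -/
def chainRecD {X : Type*} (ρ : X → X → ℝ) (f : X → X) (ε : ℝ) : Set X :=
  {y | EpsChainD ρ f ε y y}

/-! ### Auxiliary lemmas -/

/-- Triangle-type inequality for `Complex.abs`. -/
lemma abs_sub_abs_le' (a b : ℂ) : ‖a‖ - ‖b‖ ≤ ‖a - b‖ := by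
  simpa using norm_sub_norm_le a b

lemma deuc2_fst (x y : ℂ × ℂ) : ‖x.1 - y.1‖ ≤ deuc2 x y := by
  have h := Real.sqrt_le_sqrt (le_add_of_nonneg_right (sq_nonneg (‖x.2 - y.2‖))
    : ‖x.1 - y.1‖ ^ 2 ≤ ‖x.1 - y.1‖ ^ 2 + ‖x.2 - y.2‖ ^ 2)
  rwa [Real.sqrt_sq (norm_nonneg _)] at h

lemma deuc2_snd (x y : ℂ × ℂ) : ‖x.2 - y.2‖ ≤ deuc2 x y := by
  have h := Real.sqrt_le_sqrt (le_add_of_nonneg_left (sq_nonneg (‖x.1 - y.1‖))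
    : ‖x.2 - y.2‖ ^ 2 ≤ ‖x.1 - y.1‖ ^ 2 + ‖x.2 - y.2‖ ^ 2)
  rwa [Real.sqrt_sq (norm_nonneg _)] at h

lemma dist_le_deuc2 (x y : ℂ × ℂ) : dist x y ≤ deuc2 x y := by
  rw [Prod.dist_eq]
  exact max_le (by rw [Complex.dist_eq]; exact deuc2_fst x y)
    (by rw [Complex.dist_eq]; exact deuc2_snd x y)

/-- Elementary growth estimate. -/
lemma pow_growth {t C : ℝ} {d : ℕ} (hd : 2 ≤ d) (hC : 0 ≤ C)
    (ht : C + 4 ≤ t) : 2 * t ≤ t ^ d - C * t ^ (d - 1) := by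
  obtain ⟨k, rfl⟩ : ∃ k, d = k + 1 := ⟨d - 1, by omega⟩
  have hk : 1 ≤ k := by omega
  have ht1 : (1:ℝ) ≤ t := by linarith
  simp only [Nat.add_sub_cancel]
  have h1 : t ≤ t ^ k := by
    calc t = t ^ 1 := (pow_one t).symm
    _ ≤ t ^ k := pow_le_pow_right₀ ht1 hk
  have h2 : t ^ (k + 1) - C * t ^ k = t ^ k * (t - C) := by ring
  rw [h2]
  have h3 : (4:ℝ) ≤ t - C := by linarith
  have h4 : (0:ℝ) ≤ t ^ k := by positivity
  nlinarith

/-- A bound for polynomials of degree at most `k`. -/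
lemma poly_tail_bound (r : Polynomial ℂ) (k : ℕ) (hr : r.natDegree ≤ k) :
    ∃ C : ℝ, 0 ≤ C ∧ ∀ z : ℂ, 1 ≤ ‖z‖ →
      ‖r.eval z‖ ≤ C * ‖z‖ ^ k := by
  refine ⟨∑ i ∈ Finset.range (k + 1), ‖r.coeff i‖,
    Finset.sum_nonneg fun i _ => norm_nonneg _, fun z hz => ?_⟩
  rw [Polynomial.eval_eq_sum_range' (Nat.lt_succ_of_le hr)]
  calc ‖∑ i ∈ Finset.range (k + 1), r.coeff i * z ^ i‖
      ≤ ∑ i ∈ Finset.range (k + 1), ‖r.coeff i * z ^ i‖ :=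
        norm_sum_le _ _
    _ ≤ ∑ i ∈ Finset.range (k + 1), ‖r.coeff i‖ * ‖z‖ ^ k := by
        refine Finset.sum_le_sum fun i hi => ?_
        rw [norm_mul, norm_pow]
        exact mul_le_mul_of_nonneg_left
          (pow_le_pow_right₀ hz (Nat.lt_succ_iff.mp (Finset.mem_range.mp hi)))
          (norm_nonneg _)
    _ = _ := by rw [← Finset.sum_mul]

/-- Escape estimate for the base polynomial. -/
lemma p_growth (d : ℕ) (hd : 2 ≤ d) (p : Polynomial ℂ) (hp : p.natDegree = d)
    (hpm : p.coeff d = 1) :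
    ∃ R0 : ℝ, 4 ≤ R0 ∧ ∀ z : ℂ, R0 ≤ ‖z‖ →
      2 * ‖z‖ ≤ ‖p.eval z‖ := by
  set r : Polynomial ℂ := p - Polynomial.X ^ d with hr
  have hrdeg : r.natDegree ≤ d - 1 := by
    rw [Polynomial.natDegree_le_iff_coeff_eq_zero]
    intro N hN
    have hNd : d ≤ N := by omega
    rcases eq_or_lt_of_le hNd with h | h
    · simp [hr, Polynomial.coeff_X_pow, ← h, hpm]
    · rw [hr, Polynomial.coeff_sub, Polynomial.coeff_X_pow,
        Polynomial.coeff_eq_zero_of_natDegree_lt (by omega : p.natDegree < N)]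
      simp [Nat.ne_of_gt h]
  obtain ⟨C, hC0, hC⟩ := poly_tail_bound r (d - 1) hrdeg
  refine ⟨C + 4, by linarith, fun z hz => ?_⟩
  have hz1 : (1:ℝ) ≤ ‖z‖ := by linarith
  have heval : r.eval z = p.eval z - z ^ d := by simp [hr]
  have htri : ‖z ^ d‖ - ‖r.eval z‖ ≤ ‖p.eval z‖ := by
    have h := abs_sub_abs_le' (z ^ d) (- r.eval z)
    have : z ^ d - (- r.eval z) = p.eval z := by rw [heval]; ring
    rw [this] at h
    simpa using h
  have habs : ‖z ^ d‖ = ‖z‖ ^ d := norm_pow _ _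
  have hg := pow_growth hd hC0 hz (t := ‖z‖)
  have hCz := hC z hz1
  linarith [habs ▸ htri]

/-- Escape estimate for the fiber polynomial, over a disk of radius `M`. -/
lemma q_growth (d : ℕ) (hd : 2 ≤ d) (q : MvPolynomial (Fin 2) ℂ)
    (hq : q.totalDegree = d)
    (hqm : MvPolynomial.coeff (Finsupp.single (1 : Fin 2) d) q = 1)
    (M : ℝ) (hM : 1 ≤ M) :
    ∃ R1 : ℝ, 4 ≤ R1 ∧ ∀ z w : ℂ, ‖z‖ ≤ M → R1 ≤ ‖w‖ →
      2 * ‖w‖ ≤ ‖MvPolynomial.eval ![z, w] q‖ := by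
  classical
  set s : Fin 2 →₀ ℕ := Finsupp.single (1 : Fin 2) d with hs
  set r : MvPolynomial (Fin 2) ℂ := q - MvPolynomial.monomial s 1 with hr
  -- support bound for r
  have hsupp : ∀ m ∈ r.support, (m 0 : ℕ) ≤ d ∧ m 1 ≤ d - 1 := by
    intro m hm
    have hcm : MvPolynomial.coeff m r ≠ 0 := MvPolynomial.mem_support_iff.mp hm
    have hms : s ≠ m := by
      intro h
      apply hcm
      rw [hr, MvPolynomial.coeff_sub, MvPolynomial.coeff_monomial, if_pos h, ← h, hqm, sub_self]
    have hcq : MvPolynomial.coeff m q ≠ 0 := by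
      intro h
      apply hcm
      rw [hr, MvPolynomial.coeff_sub, MvPolynomial.coeff_monomial, if_neg hms, h, sub_zero]
    have hmq : m ∈ q.support := MvPolynomial.mem_support_iff.mpr hcq
    have hsum : (m.sum fun _ e => e) ≤ d := hq ▸ MvPolynomial.le_totalDegree hmq
    have hsum2 : m 0 + m 1 ≤ d := by
      rw [Finsupp.sum_fintype _ _ (fun i => rfl), Fin.sum_univ_two] at hsum
      exact hsum
    constructor
    · omega
    · by_contra h
      have hm1 : m 1 = d := by omega
      have hm0 : m 0 = 0 := by omega
      exact hms (Finsupp.ext fun i => by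
        fin_cases i <;> simp [hs, Finsupp.single_apply, hm0, hm1])
  set C : ℝ := (∑ m ∈ r.support, ‖MvPolynomial.coeff m r‖) * M ^ d with hCdef
  have hC0 : 0 ≤ C := by
    apply mul_nonneg (Finset.sum_nonneg fun i _ => norm_nonneg _) (by positivity)
  refine ⟨C + 4, by linarith, fun z w hzM hw => ?_⟩
  have hw1 : (1:ℝ) ≤ ‖w‖ := by linarith
  -- bound on eval of r
  have hrbound : ‖MvPolynomial.eval ![z, w] r‖ ≤ C * ‖w‖ ^ (d - 1) := by
    rw [MvPolynomial.eval_eq']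
    calc ‖∑ m ∈ r.support, MvPolynomial.coeff m r * ∏ i, ![z, w] i ^ m i‖
        ≤ ∑ m ∈ r.support, ‖MvPolynomial.coeff m r * ∏ i, ![z, w] i ^ m i‖ :=
          norm_sum_le _ _
      _ ≤ ∑ m ∈ r.support,
            ‖MvPolynomial.coeff m r‖ * (M ^ d * ‖w‖ ^ (d - 1)) := by
          refine Finset.sum_le_sum fun m hm => ?_
          obtain ⟨hm0, hm1⟩ := hsupp m hm
          rw [norm_mul]
          refine mul_le_mul_of_nonneg_left ?_ (norm_nonneg _)
          have hprod : (∏ i, ![z, w] i ^ m i) = z ^ m 0 * w ^ m 1 := by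
            rw [Fin.prod_univ_two]; simp
          rw [hprod, norm_mul, norm_pow, norm_pow]
          have h1 : ‖z‖ ^ m 0 ≤ M ^ d := by
            calc ‖z‖ ^ m 0 ≤ M ^ m 0 :=
                  pow_le_pow_left₀ (norm_nonneg _) hzM _
              _ ≤ M ^ d := pow_le_pow_right₀ hM hm0
          have h2 : ‖w‖ ^ m 1 ≤ ‖w‖ ^ (d - 1) :=
            pow_le_pow_right₀ hw1 hm1
          exact mul_le_mul h1 h2 (by positivity) (by positivity)
      _ = C * ‖w‖ ^ (d - 1) := by
          rw [hCdef, ← Finset.sum_mul, mul_assoc]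
  -- eval of the monomial is w ^ d
  have hmon : MvPolynomial.eval ![z, w] (MvPolynomial.monomial s (1:ℂ)) = w ^ d := by
    rw [MvPolynomial.eval_monomial, hs, Finsupp.prod_single_index (by simp)]
    simp
  have heval : MvPolynomial.eval ![z, w] r = MvPolynomial.eval ![z, w] q - w ^ d := by
    rw [hr, map_sub, hmon]
  have htri : ‖w ^ d‖ - ‖MvPolynomial.eval ![z, w] r‖
      ≤ ‖MvPolynomial.eval ![z, w] q‖ := by
    have h := abs_sub_abs_le' (w ^ d) (- MvPolynomial.eval ![z, w] r)
    have h2 : w ^ d - (- MvPolynomial.eval ![z, w] r) = MvPolynomial.eval ![z, w] q := by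
      rw [heval]; ring
    rw [h2] at h
    simpa using h
  have habs : ‖w ^ d‖ = ‖w‖ ^ d := norm_pow _ _
  have hg := pow_growth hd hC0 hw (t := ‖w‖)
  linarith [habs ▸ htri]

lemma skew_continuous (p : Polynomial ℂ) (q : MvPolynomial (Fin 2) ℂ) :
    Continuous (skew p q) := by
  unfold skew
  refine Continuous.prodMk ((p.continuous).comp continuous_fst) ?_
  have h1 : Continuous fun x : ℂ × ℂ => (![x.1, x.2] : Fin 2 → ℂ) := by
    refine continuous_pi fun i => ?_
    fin_cases i
    · simpa using continuous_fst
    · simpa using continuous_snd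
  exact (MvPolynomial.continuous_eval (p := q)).comp h1

/-- Every `1`-chain from a point to itself stays in the box `{|z| ≤ R0, |w| ≤ R1}`. -/
lemma chainBox (p : Polynomial ℂ) (q : MvPolynomial (Fin 2) ℂ) (R0 R1 : ℝ)
    (hR0 : 4 ≤ R0) (hR1 : 4 ≤ R1)
    (hgp : ∀ z : ℂ, R0 ≤ ‖z‖ → 2 * ‖z‖ ≤ ‖p.eval z‖)
    (hgq : ∀ z w : ℂ, ‖z‖ ≤ R0 → R1 ≤ ‖w‖ →
      2 * ‖w‖ ≤ ‖MvPolynomial.eval ![z, w] q‖)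
    (c : ℕ → ℂ × ℂ) (m : ℕ) (hm : 1 ≤ m) (hc : c m = c 0)
    (hlink : ∀ k < m, deuc2 (skew p q (c k)) (c (k + 1)) < 1) :
    ∀ k ≤ m, ‖(c k).1‖ ≤ R0 ∧ ‖(c k).2‖ ≤ R1 := by
  have hl1 : ∀ k < m, ‖(c (k + 1)).1 - p.eval (c k).1‖ < 1 := by
    intro k hk
    have h := (deuc2_fst (skew p q (c k)) (c (k + 1))).trans_lt (hlink k hk)
    rwa [show (skew p q (c k)).1 = p.eval (c k).1 from rfl,
      norm_sub_rev] at h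
  have hl2 : ∀ k < m,
      ‖(c (k + 1)).2 - MvPolynomial.eval ![(c k).1, (c k).2] q‖ < 1 := by
    intro k hk
    have h := (deuc2_snd (skew p q (c k)) (c (k + 1))).trans_lt (hlink k hk)
    rwa [show (skew p q (c k)).2 = MvPolynomial.eval ![(c k).1, (c k).2] q from rfl,
      norm_sub_rev] at h
  -- first coordinate
  have helper1 : ∀ k, R0 < ‖(c k).1‖ → ∀ j, k + j ≤ m →
      ‖(c k).1‖ + j ≤ ‖(c (k + j)).1‖ := by
    intro k hk j
    induction j with
    | zero => intro _; simp
    | succ j ih =>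
      intro hj
      have hj' : k + j < m := by omega
      have IH := ih (by omega)
      have hRj : R0 < ‖(c (k + j)).1‖ := by
        have : (0:ℝ) ≤ j := Nat.cast_nonneg j
        linarith
      have hstep := hgp _ hRj.le
      have htri := abs_sub_abs_le' (p.eval (c (k + j)).1) (p.eval (c (k + j)).1 - (c (k + j + 1)).1)
      have hl := hl1 (k + j) hj'
      rw [norm_sub_rev] at hl
      have h2 : ‖p.eval (c (k + j)).1‖ - 1 ≤ ‖(c (k + j + 1)).1‖ := by
        have h3 : p.eval (c (k + j)).1 - (p.eval (c (k + j)).1 - (c (k + j + 1)).1)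
            = (c (k + j + 1)).1 := by ring
        rw [h3] at htri
        linarith
      have : (c (k + (j + 1))) = c (k + j + 1) := by ring_nf
      rw [this]
      push_cast
      linarith
  have step1 : ∀ k ≤ m, ‖(c k).1‖ ≤ R0 := by
    by_contra h
    push_neg at h
    obtain ⟨k, hkm, hk⟩ := h
    have h0 : R0 < ‖(c 0).1‖ := by
      have hh := helper1 k hk (m - k) (by omega)
      rw [show k + (m - k) = m by omega, hc] at hh
      have hnn : (0:ℝ) ≤ ((m - k : ℕ) : ℝ) := Nat.cast_nonneg _
      linarith
    have hfin := helper1 0 h0 m (by omega)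
    rw [zero_add, hc] at hfin
    have hm1 : (1:ℝ) ≤ m := by exact_mod_cast hm
    linarith
  -- second coordinate
  have helper2 : ∀ k, R1 < ‖(c k).2‖ → ∀ j, k + j ≤ m →
      ‖(c k).2‖ + j ≤ ‖(c (k + j)).2‖ := by
    intro k hk j
    induction j with
    | zero => intro _; simp
    | succ j ih =>
      intro hj
      have hj' : k + j < m := by omega
      have IH := ih (by omega)
      have hRj : R1 < ‖(c (k + j)).2‖ := by
        have : (0:ℝ) ≤ j := Nat.cast_nonneg j
        linarith
      have hz : ‖(c (k + j)).1‖ ≤ R0 := step1 _ (by omega)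
      have hstep := hgq (c (k + j)).1 (c (k + j)).2 hz hRj.le
      have htri := abs_sub_abs_le' (MvPolynomial.eval ![(c (k + j)).1, (c (k + j)).2] q)
        (MvPolynomial.eval ![(c (k + j)).1, (c (k + j)).2] q - (c (k + j + 1)).2)
      have hl := hl2 (k + j) hj'
      rw [norm_sub_rev] at hl
      have h2 : ‖MvPolynomial.eval ![(c (k + j)).1, (c (k + j)).2] q‖ - 1
          ≤ ‖(c (k + j + 1)).2‖ := by
        have h3 : MvPolynomial.eval ![(c (k + j)).1, (c (k + j)).2] q
            - (MvPolynomial.eval ![(c (k + j)).1, (c (k + j)).2] q - (c (k + j + 1)).2)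
            = (c (k + j + 1)).2 := by ring
        rw [h3] at htri
        linarith
      have : (c (k + (j + 1))) = c (k + j + 1) := by ring_nf
      rw [this]
      push_cast
      linarith
  have step2 : ∀ k ≤ m, ‖(c k).2‖ ≤ R1 := by
    by_contra h
    push_neg at h
    obtain ⟨k, hkm, hk⟩ := h
    have h0 : R1 < ‖(c 0).2‖ := by
      have hh := helper2 k hk (m - k) (by omega)
      rw [show k + (m - k) = m by omega, hc] at hh
      have : (0:ℝ) ≤ (m - k : ℕ) := Nat.cast_nonneg _
      linarith
    have hfin := helper2 0 h0 m (by omega)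
    rw [zero_add, hc] at hfin
    have hm1 : (1:ℝ) ≤ m := by exact_mod_cast hm
    linarith
  exact fun k hk => ⟨step1 k hk, step2 k hk⟩

/-- Finite-time shadowing by continuity: chains with small links track the orbit. -/
lemma shadow (f : ℂ × ℂ → ℂ × ℂ) (hf : Continuous f) (x : ℂ × ℂ) :
    ∀ n : ℕ, ∀ η > (0:ℝ), ∃ δ > (0:ℝ), ∀ c : ℕ → ℂ × ℂ, c 0 = x →
      (∀ k < n, dist (f (c k)) (c (k + 1)) < δ) → dist (c n) (f^[n] x) < η := by
  intro n
  induction n with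
  | zero =>
    intro η hη
    exact ⟨1, one_pos, fun c h0 _ => by simp [h0, hη]⟩
  | succ n ih =>
    intro η hη
    obtain ⟨θ, hθ, hcont⟩ := Metric.continuous_iff.mp hf (f^[n] x) (η / 2) (by linarith)
    obtain ⟨δ, hδ, hsh⟩ := ih θ hθ
    refine ⟨min δ (η / 2), by positivity, fun c h0 hl => ?_⟩
    have h1 : dist (c n) (f^[n] x) < θ :=
      hsh c h0 fun k hk => (hl k (by omega)).trans_le (min_le_left _ _)
    have h2 : dist (f (c n)) (f (f^[n] x)) < η / 2 := hcont _ h1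
    have h3 : dist (c (n + 1)) (f (c n)) < η / 2 := by
      rw [dist_comm]
      exact (hl n (by omega)).trans_le (min_le_right _ _)
    calc dist (c (n + 1)) (f^[n + 1] x)
        ≤ dist (c (n + 1)) (f (c n)) + dist (f (c n)) (f^[n + 1] x) := dist_triangle _ _ _
      _ < η := by
          rw [Function.iterate_succ_apply']
          linarith

/-- the chain recurrent set (Euclidean metric) of a monic polynomial skew
product of degree `d ≥ 2` is contained in the filled Julia set `K`; in particular it is
bounded, contained in some `[−R,R]⁴`. -/
theorem stmt_12 (d : ℕ) (hd : 2 ≤ d) (p : Polynomial ℂ) (q : MvPolynomial (Fin 2) ℂ)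
    (hp : p.natDegree = d) (hq : q.totalDegree = d)
    (hpm : p.coeff d = 1)
    (hqm : MvPolynomial.coeff (Finsupp.single (1 : Fin 2) d) q = 1) :
    (⋂ ε > (0 : ℝ), chainRecD deuc2 (skew p q) ε) ⊆
      {x : ℂ × ℂ | Bornology.IsBounded (Set.range fun n => (skew p q)^[n] x)} ∧
    ∃ R : ℝ, 0 < R ∧ ∀ x ∈ ⋂ ε > (0 : ℝ), chainRecD deuc2 (skew p q) ε,
      |x.1.re| ≤ R ∧ |x.1.im| ≤ R ∧ |x.2.re| ≤ R ∧ |x.2.im| ≤ R := by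
  obtain ⟨R0, hR0, hgp⟩ := p_growth d hd p hp hpm
  obtain ⟨R1, hR1, hgq⟩ := q_growth d hd q hq hqm R0 (by linarith)
  set f := skew p q with hf
  have hfc : Continuous f := skew_continuous p q
  -- membership unfolding
  have hmem : ∀ x ∈ ⋂ ε > (0:ℝ), chainRecD deuc2 f ε, ∀ ε > (0:ℝ),
      EpsChainD deuc2 f ε x x := by
    intro x hx ε hε
    have := Set.mem_iInter₂.mp hx ε hε
    exact this
  -- key orbit bound
  have korbit : ∀ x ∈ ⋂ ε > (0:ℝ), chainRecD deuc2 f ε, ∀ n : ℕ,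
      ‖(f^[n] x).1‖ ≤ R0 ∧ ‖(f^[n] x).2‖ ≤ R1 := by
    intro x hx n
    have key : ∀ η > (0:ℝ), ‖(f^[n] x).1‖ ≤ R0 + η ∧
        ‖(f^[n] x).2‖ ≤ R1 + η := by
      intro η hη
      obtain ⟨δ, hδ, hsh⟩ := shadow f hfc x n η hη
      set ε := min δ 1 with hε
      have hε0 : 0 < ε := by positivity
      obtain ⟨m, hm, c, h0, hcm, hlink⟩ := hmem x hx ε hε0
      have hc : c m = c 0 := by rw [h0, hcm]
      -- box bound for the chain
      have hbox := chainBox p q R0 R1 hR0 hR1 hgp hgq c m hm hc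
        (fun k hk => (hlink k hk).trans_le (min_le_right _ _))
      -- periodic extension
      set c' : ℕ → ℂ × ℂ := fun k => c (k % m) with hc'
      have hm0 : m ≠ 0 := by omega
      have hlink' : ∀ k, deuc2 (f (c' k)) (c' (k + 1)) < ε := by
        intro k
        have hjm : k % m < m := Nat.mod_lt _ (by omega)
        have hmod : (k + 1) % m = (k % m + 1) % m := (Nat.mod_add_mod k m 1).symm
        by_cases h : k % m + 1 = m
        · have h2 : (k + 1) % m = 0 := by rw [hmod, h, Nat.mod_self]
          have h3 : c' (k + 1) = c (k % m + 1) := by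
            show c ((k + 1) % m) = c (k % m + 1)
            rw [h2, ← hc, h]
          have h4 : c' k = c (k % m) := rfl
          rw [h3, h4]
          exact hlink _ hjm
        · have h2 : (k + 1) % m = k % m + 1 := by
            rw [hmod, Nat.mod_eq_of_lt (by omega)]
          have h3 : c' (k + 1) = c (k % m + 1) := by
            show c ((k + 1) % m) = c (k % m + 1)
            rw [h2]
          have h4 : c' k = c (k % m) := rfl
          rw [h3, h4]
          exact hlink _ hjm
      have hc'0 : c' 0 = x := by rw [hc']; simp [Nat.zero_mod, h0]
      have hdistlinks : ∀ k < n, dist (f (c' k)) (c' (k + 1)) < δ := by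
        intro k _
        exact lt_of_le_of_lt (dist_le_deuc2 _ _)
          ((hlink' k).trans_le (min_le_left _ _))
      have hshn := hsh c' hc'0 hdistlinks
      have hboxn := hbox (n % m) (Nat.mod_lt _ (by omega)).le
      have hd1 : dist ((f^[n] x).1) ((c' n).1) ≤ dist (f^[n] x) (c' n) := by
        rw [Prod.dist_eq]; exact le_max_left _ _
      have hd2 : dist ((f^[n] x).2) ((c' n).2) ≤ dist (f^[n] x) (c' n) := by
        rw [Prod.dist_eq]; exact le_max_right _ _
      have hdc : dist (f^[n] x) (c' n) < η := by rwa [dist_comm] at hshn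
      constructor
      · have tri := abs_sub_abs_le' ((f^[n] x).1) ((c' n).1)
        have : ‖(f^[n] x).1 - (c' n).1‖ < η := by
          rw [← Complex.dist_eq]
          exact lt_of_le_of_lt hd1 hdc
        have hb : ‖(c' n).1‖ ≤ R0 := hboxn.1
        linarith
      · have tri := abs_sub_abs_le' ((f^[n] x).2) ((c' n).2)
        have : ‖(f^[n] x).2 - (c' n).2‖ < η := by
          rw [← Complex.dist_eq]
          exact lt_of_le_of_lt hd2 hdc
        have hb : ‖(c' n).2‖ ≤ R1 := hboxn.2
        linarith
    constructor
    · exact le_of_forall_pos_le_add fun η hη => (key η hη).1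
    · exact le_of_forall_pos_le_add fun η hη => (key η hη).2
  constructor
  · -- boundedness of orbits
    intro x hx
    have hsub : Set.range (fun n => f^[n] x) ⊆ Metric.closedBall 0 (max R0 R1) := by
      rintro y ⟨n, rfl⟩
      obtain ⟨h1, h2⟩ := korbit x hx n
      simp only [Metric.mem_closedBall, Prod.dist_eq, Complex.dist_eq, Prod.fst_zero,
        Prod.snd_zero, sub_zero]
      exact max_le_max h1 h2
    exact Metric.isBounded_closedBall.subset hsub
  · -- the box bound
    refine ⟨max R0 R1, by positivity, fun x hx => ?_⟩
    have hx0 : ‖x.1‖ ≤ R0 ∧ ‖x.2‖ ≤ R1 := by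
      have := korbit x hx 0
      simpa using this
    have hA : ‖x.1‖ ≤ max R0 R1 := hx0.1.trans (le_max_left _ _)
    have hB : ‖x.2‖ ≤ max R0 R1 := hx0.2.trans (le_max_right _ _)
    exact ⟨(Complex.abs_re_le_norm x.1).trans hA, (Complex.abs_im_le_norm x.1).trans hA,
      (Complex.abs_re_le_norm x.2).trans hB, (Complex.abs_im_le_norm x.2).trans hB⟩
end

section
/- Let (X,d) be a nonempty compact metric space and f : X → X a continuous map. Then: (i) for all 0 < α < α', the closure of 𝓡_α is contained in 𝓡_{α'}; (ii) each closure(𝓡_α) is a nonempty compact set, the chain recurrent set 𝓡 satisfies 𝓡 = ⋂_{α>0} closure(𝓡_α), and 𝓡 is nonempty and compact; and (iii) the Hausdorff distance d_H(closure(𝓡_α), 𝓡) tends to 0 as α → 0⁺. -/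
/-!
Chains are stable under moving an endpoint: replacing the start `x` of an `α`-chain by a point
`y` with `f y` near `f x`, or its end by a nearby point, costs only a little in `α`. With the
continuity of `f` this gives `closure 𝓡_α ⊆ 𝓡_α'` for `α < α'`, hence
`𝓡 = ⋂_{α>0} closure 𝓡_α`. Each `𝓡_α` is nonempty because by compactness some orbit returns
`α`-close to one of its points. The rest is Cantor's intersection theorem for the nested compact
sets `closure 𝓡_α`: their intersection is nonempty, and it is eventually approximated by them
within any given distance, which is the Hausdorff convergence.
-/

open Filter Topology Metric

namespace EpsChain

variable {X : Type*} [MetricSpace X] {f : X → X} {α η : ℝ} {x y z : X}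

lemma mono {α' : ℝ} (h : EpsChain f α y z) (hα : α ≤ α') : EpsChain f α' y z := by
  obtain ⟨m, hm, c, hc0, hcm, hc⟩ := h
  exact ⟨m, hm, c, hc0, hcm, fun k hk => (hc k hk).trans_le hα⟩

lemma replace_start (h : EpsChain f α x z) (hy : dist (f y) (f x) < η) :
    EpsChain f (α + η) y z := by
  obtain ⟨m, hm, c, hc0, hcm, hc⟩ := h
  have hη : 0 < η := dist_nonneg.trans_lt hy
  refine ⟨m, hm, Function.update c 0 y, Function.update_self .., ?_, fun k hk => ?_⟩
  · rwa [Function.update_of_ne (by omega)]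
  rw [Function.update_of_ne k.succ_ne_zero]
  rcases Nat.eq_zero_or_pos k with rfl | hk0
  · rw [Function.update_self]
    calc dist (f y) (c 1) ≤ dist (f y) (f x) + dist (f x) (c 1) := dist_triangle ..
      _ < η + α := add_lt_add hy (hc0 ▸ hc 0 hk)
      _ = α + η := add_comm ..
  · rw [Function.update_of_ne hk0.ne']
    linarith [hc k hk]

lemma replace_end (h : EpsChain f α y x) (hz : dist x z < η) : EpsChain f (α + η) y z := by
  obtain ⟨m, hm, c, hc0, hcm, hc⟩ := h
  have hη : 0 < η := dist_nonneg.trans_lt hz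
  refine ⟨m, hm, Function.update c m z, ?_, Function.update_self .., fun k hk => ?_⟩
  · rwa [Function.update_of_ne (by omega)]
  rw [Function.update_of_ne hk.ne]
  rcases eq_or_ne (k + 1) m with hkm | hkm
  · rw [hkm, Function.update_self]
    calc dist (f (c k)) z ≤ dist (f (c k)) x + dist x z := dist_triangle ..
      _ < α + η := add_lt_add (hcm ▸ hkm ▸ hc k hk) hz
  · rw [Function.update_of_ne hkm]
    linarith [hc k hk]

lemma iterate (hα : 0 < α) {n : ℕ} (hn : 1 ≤ n) : EpsChain f α x (f^[n] x) :=
  ⟨n, hn, fun k => f^[k] x, rfl, rfl, fun k _ => by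
    rwa [← Function.iterate_succ_apply' f k x, dist_self]⟩

end EpsChain

section ChainRecurrence

variable {X : Type*} [MetricSpace X] (f : X → X)

lemma chainRecSet_mono {ε ε' : ℝ} (h : ε ≤ ε') : chainRecSet f ε ⊆ chainRecSet f ε' :=
  fun _ hy => EpsChain.mono hy h

lemma closure_chainRecSet_subset (hf : Continuous f) {α α' : ℝ} (h : α < α') :
    closure (chainRecSet f α) ⊆ chainRecSet f α' := by
  intro y hy
  set η := (α' - α) / 2
  have hη : 0 < η := by simp only [η]; linarith
  obtain ⟨δ, hδ, hfδ⟩ := continuous_iff.1 hf y η hη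
  obtain ⟨x, hx, hyx⟩ := mem_closure_iff.1 hy (min δ η) (lt_min hδ hη)
  have hfyx : dist (f y) (f x) < η :=
    dist_comm (f x) (f y) ▸ hfδ x (dist_comm y x ▸ hyx.trans_le (min_le_left ..))
  have hxy : dist x y < η := dist_comm y x ▸ hyx.trans_le (min_le_right ..)
  have hchain := (EpsChain.replace_start hx hfyx).replace_end hxy
  exact hchain.mono (by simp only [η]; linarith)

lemma biInter_chainRecSet_eq (hf : Continuous f) :
    ⋂ ε > (0 : ℝ), chainRecSet f ε = ⋂ α > (0 : ℝ), closure (chainRecSet f α) := by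
  refine (Set.iInter₂_mono fun _ _ => subset_closure).antisymm ?_
  simp only [Set.subset_def, Set.mem_iInter]
  exact fun y hy ε hε => closure_chainRecSet_subset f hf (half_lt_self hε) (hy _ (half_pos hε))

lemma exists_iterate_dist_lt [CompactSpace X] (x : X) {ε : ℝ} (hε : 0 < ε) :
    ∃ n k : ℕ, 1 ≤ k ∧ dist (f^[k] (f^[n] x)) (f^[n] x) < ε := by
  obtain ⟨p, -, φ, hφ, hlim⟩ := isCompact_univ.tendsto_subseq (x := fun n => f^[n] x)
    fun n => Set.mem_univ _
  obtain ⟨N, hN⟩ := cauchySeq_iff'.1 hlim.cauchySeq ε hε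
  have hlt : φ N < φ (N + 1) := hφ N.lt_succ_self
  refine ⟨φ N, φ (N + 1) - φ N, by omega, ?_⟩
  rw [← Function.iterate_add_apply, Nat.sub_add_cancel hlt.le]
  exact hN (N + 1) N.le_succ

lemma chainRecSet_nonempty [CompactSpace X] [Nonempty X] {α : ℝ} (hα : 0 < α) :
    (chainRecSet f α).Nonempty := by
  obtain ⟨n, k, hk, hd⟩ := exists_iterate_dist_lt f (Classical.arbitrary X) (half_pos hα)
  exact ⟨_, ((EpsChain.iterate (half_pos hα) hk).replace_end hd).mono (add_halves α).le⟩

end ChainRecurrence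

section NestedCompact

variable {X : Type*} {K : ℝ → Set X}

lemma directed_pos_of_monotone (hK : Monotone K) :
    Directed (· ⊇ ·) fun α : {α : ℝ // 0 < α} => K α :=
  (hK.comp (Subtype.mono_coe _)).directed_ge

lemma iInter_pos_eq_biInter (K : ℝ → Set X) :
    ⋂ α : {α : ℝ // 0 < α}, K α = ⋂ α > (0 : ℝ), K α :=
  Set.iInter_subtype _ _

lemma nonempty_biInter_pos_of_monotone [TopologicalSpace X] [CompactSpace X] (hK : Monotone K)
    (hcl : ∀ α, IsClosed (K α)) (hne : ∀ α > 0, (K α).Nonempty) :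
    (⋂ α > (0 : ℝ), K α).Nonempty := by
  rw [← iInter_pos_eq_biInter]
  exact IsCompact.nonempty_iInter_of_directed_nonempty_isCompact_isClosed _
    (directed_pos_of_monotone hK) (fun α => hne α α.2) (fun α => (hcl α).isCompact) fun α => hcl α

lemma tendsto_hausdorffDist_biInter_pos [MetricSpace X] [CompactSpace X] (hK : Monotone K)
    (hcl : ∀ α, IsClosed (K α)) :
    Tendsto (fun α => hausdorffDist (K α) (⋂ β > (0 : ℝ), K β)) (𝓝[>] 0) (𝓝 0) := by
  rw [Metric.tendsto_nhds]
  intro δ hδ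
  obtain ⟨α₀, hα₀⟩ : ∃ α₀ : {α : ℝ // 0 < α}, K α₀ ⊆ thickening (δ / 2) (⋂ β > (0 : ℝ), K β) :=
    exists_subset_nhds_of_isCompact' (directed_pos_of_monotone hK) (fun α => (hcl α).isCompact)
      (fun α => hcl α) fun x hx => isOpen_thickening.mem_nhds <|
        self_subset_thickening (half_pos hδ) _ (iInter_pos_eq_biInter K ▸ hx)
  filter_upwards [Ioc_mem_nhdsGT α₀.2] with α hα
  have hle : hausdorffDist (K α) (⋂ β > (0 : ℝ), K β) ≤ δ / 2 := by
    refine hausdorffDist_le_of_mem_dist (half_pos hδ).le (fun x hx => ?_) fun y hy => ?_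
    · obtain ⟨z, hz, hxz⟩ := mem_thickening_iff.1 (hα₀ (hK hα.2 hx))
      exact ⟨z, hz, hxz.le⟩
    · exact ⟨y, Set.mem_iInter₂.1 hy α hα.1, by simpa using (half_pos hδ).le⟩
  rw [Real.dist_eq, sub_zero, abs_of_nonneg hausdorffDist_nonneg]
  linarith

end NestedCompact

/-- for a continuous self-map of a nonempty compact metric space:
(i) `closure 𝓡_α ⊆ 𝓡_{α'}` for `0 < α < α'`;
(ii) each `closure 𝓡_α` is nonempty and compact, `𝓡 = ⋂_{α>0} closure 𝓡_α`, and `𝓡`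
is nonempty and compact;
(iii) `d_H(closure 𝓡_α, 𝓡) → 0` as `α → 0⁺`. -/
theorem stmt_14 {X : Type*} [MetricSpace X] [CompactSpace X] [Nonempty X]
    (f : X → X) (hf : Continuous f) :
    (∀ α α' : ℝ, 0 < α → α < α' → closure (chainRecSet f α) ⊆ chainRecSet f α') ∧
    (∀ α : ℝ, 0 < α →
      (closure (chainRecSet f α)).Nonempty ∧ IsCompact (closure (chainRecSet f α))) ∧
    (⋂ ε > (0 : ℝ), chainRecSet f ε) = (⋂ α > (0 : ℝ), closure (chainRecSet f α)) ∧
    (⋂ ε > (0 : ℝ), chainRecSet f ε).Nonempty ∧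
    IsCompact (⋂ ε > (0 : ℝ), chainRecSet f ε) ∧
    Filter.Tendsto
      (fun α : ℝ =>
        Metric.hausdorffDist (closure (chainRecSet f α)) (⋂ ε > (0 : ℝ), chainRecSet f ε))
      (nhdsWithin 0 (Set.Ioi 0)) (nhds 0) := by
  have hmono : Monotone fun α => closure (chainRecSet f α) :=
    fun _ _ h => closure_mono (chainRecSet_mono f h)
  have hne : ∀ α > 0, (closure (chainRecSet f α)).Nonempty :=
    fun _ hα => (chainRecSet_nonempty f hα).closure
  have hEq := biInter_chainRecSet_eq f hf
  refine ⟨fun α α' _ h => closure_chainRecSet_subset f hf h,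
    fun α hα => ⟨hne α hα, isClosed_closure.isCompact⟩, hEq, ?_, ?_, ?_⟩
  · exact hEq ▸ nonempty_biInter_pos_of_monotone hmono (fun _ => isClosed_closure) hne
  · exact hEq ▸ (isClosed_biInter fun _ _ => isClosed_closure).isCompact
  · exact hEq ▸ tendsto_hausdorffDist_biInter_pos hmono fun _ => isClosed_closure
end

section
/- For every real number t with √80 ≤ t ≤ 10, the forward orbit of 0 under the quadratic map w ↦ w² + c, where c = t/6 + 1.4 + 0.75·i, is unbounded. -/
/-- for every real `t` with `√80 ≤ t ≤ 10`, the forward orbit of `0` under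
`w ↦ w² + c` with `c = t/6 + 1.4 + 0.75·i` is unbounded. -/
theorem stmt_17 (t : ℝ) (h1 : Real.sqrt 80 ≤ t) (h2 : t ≤ 10) :
    ¬ Bornology.IsBounded (Set.range fun n =>
        (fun w : ℂ => w ^ 2 + (((t / 6 + 1.4 : ℝ) : ℂ) + 0.75 * Complex.I))^[n] 0) := by
  set c : ℂ := ((t / 6 + 1.4 : ℝ) : ℂ) + 0.75 * Complex.I with hc
  set f : ℂ → ℂ := fun w : ℂ => w ^ 2 + c with hf
  have ht : (8.9 : ℝ) ≤ t := by
    refine le_trans ?_ h1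
    rw [show (8.9:ℝ) = Real.sqrt (8.9^2) by rw [Real.sqrt_sq]; norm_num]
    exact Real.sqrt_le_sqrt (by norm_num)
  have h075 : (0.75 : ℂ) = ((0.75 : ℝ) : ℂ) := by norm_num
  have hre : c.re = t / 6 + 1.4 := by rw [hc, h075]; simp
  have him : c.im = 0.75 := by rw [hc, h075]; simp
  have hclow : (2.88 : ℝ) ≤ ‖c‖ := by
    calc (2.88:ℝ) ≤ c.re := by rw [hre]; linarith
    _ ≤ ‖c‖ := Complex.re_le_norm c
    _ = ‖c‖ := rfl
  have hcup : ‖c‖ ≤ 3.2 := by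
    have h := Complex.sq_norm c
    rw [Complex.normSq_apply, hre, him] at h
    have : ‖c‖ ^ 2 ≤ 3.2 ^ 2 := by nlinarith
    calc ‖c‖ = ‖c‖ := rfl
    _ ≤ 3.2 := by nlinarith [norm_nonneg c]
  -- the key growth estimate
  have key : ∀ n : ℕ, 2.88 * 1.5 ^ n ≤ ‖f^[n+1] 0‖ := by
    intro n
    induction n with
    | zero =>
      simp only [zero_add, Function.iterate_one, pow_zero, mul_one]
      have : f 0 = c := by simp [hf]
      rw [this]; exact hclow
    | succ k ih =>
      rw [Function.iterate_succ_apply']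
      set w := f^[k+1] 0
      have hw : (2.88 : ℝ) ≤ ‖w‖ := by
        have hp : (1:ℝ) ≤ 1.5 ^ k := one_le_pow₀ (by norm_num)
        nlinarith
      have hnorm : ‖w‖ ^ 2 - ‖c‖ ≤ ‖f w‖ := by
        have heq : ‖f w‖ = ‖w ^ 2 + c‖ := rfl
        rw [heq]
        have h4 : ‖w ^ 2‖ ≤ ‖w ^ 2 + c‖ + ‖c‖ := norm_le_add_norm_add _ _
        rw [← norm_pow]
        linarith
      have hgrow : 1.5 * ‖w‖ ≤ ‖w‖ ^ 2 - ‖c‖ := by nlinarith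
      calc 2.88 * 1.5 ^ (k+1) = 1.5 * (2.88 * 1.5 ^ k) := by ring
      _ ≤ 1.5 * ‖w‖ := by nlinarith
      _ ≤ ‖w‖ ^ 2 - ‖c‖ := hgrow
      _ ≤ ‖f w‖ := hnorm
  intro hb
  obtain ⟨R, hR⟩ := isBounded_iff_forall_norm_le.mp hb
  obtain ⟨n, hn⟩ := pow_unbounded_of_one_lt (R / 2.88) (by norm_num : (1:ℝ) < 1.5)
  have h1' := hR (f^[n+1] 0) ⟨n+1, rfl⟩
  have h2' := key n
  have h3' : R < 1.5 ^ n * 2.88 := (div_lt_iff₀ (by norm_num : (0:ℝ) < 2.88)).mp hn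
  linarith
end
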